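/- arXiv:0809.4557 — 5 statements merged into one kernel-verified Lean document; each statement's English description precedes it below -/
import Mathlib

section
/- Let u : ℝ≥0 → ℝ≥0 be a function such that x ↦ u(x) − x is decreasing, and let ũ be its increasing regularization. Then the set S := {x ∈ ℝ≥0 : ũ(x) = u(x)} is a Borel set and its lower density satisfies ρ₋(S) ≥ liminf_{x→∞} u(x)/x. -/
open Set Topology Filter MeasureTheory

/-!
The regularization `ũ` is increasing and, because `u x - x` is decreasing, `1`-Lipschitz. Every
level `t` strictly between `ũ 0` and `ũ b` is taken by `ũ` at a last point `y ≤ b`, and there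
`u w - w ≤ t - y` for all `w > y`. Hence either `u y = ũ y`, or `u - id` jumps down strictly at
`y`, which happens only at countably many points. So `ũ (S ∩ [0, b])` covers `(ũ 0, ũ b)` up
to the image of a countable set, and as `ũ` is `1`-Lipschitz, `|S ∩ [0, b]| ≥ ũ b - ũ 0`. Finally
`ũ b ≥ a b` for large `b` as soon as `u x ≥ a x` eventually.
-/

lemma countable_setOf_exists_lt_forall_gt_le {α : Type*} [LinearOrder α] (f : α → ℝ) :
    {x | ∃ c < f x, ∀ y, x < y → f y ≤ c}.Countable := by
  have hrat : ∀ x : {x | ∃ c < f x, ∀ y, x < y → f y ≤ c},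
      ∃ q : ℚ, (∀ y, (x : α) < y → f y < q) ∧ (q : ℝ) < f x := by
    rintro ⟨x, c, hc, hle⟩
    obtain ⟨q, hcq, hqf⟩ := exists_rat_btwn hc
    exact ⟨q, fun y hy => (hle y hy).trans_lt hcq, hqf⟩
  choose q hq_right hq_lt using hrat
  refine countable_coe_iff.mp (Function.Injective.countable (f := q) fun x y hxy => ?_)
  refine Subtype.ext (le_antisymm (not_lt.mp fun hyx => ?_) (not_lt.mp fun hxy' => ?_))
  · exact lt_irrefl _ ((hq_right y x hyx).trans (hxy ▸ hq_lt x))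
  · exact lt_irrefl _ ((hq_right x y hxy').trans (hxy.symm ▸ hq_lt y))

lemma volume_real_inter_Icc_zero_div_le_one (s : Set ℝ) {x : ℝ} (hx : 0 < x) :
    volume.real (s ∩ Icc 0 x) / x ≤ 1 := by
  refine div_le_one_of_le₀ ?_ hx.le
  calc volume.real (s ∩ Icc 0 x)
      ≤ volume.real (Icc 0 x) := measureReal_mono inter_subset_right measure_Icc_lt_top.ne
    _ = x := by rw [Real.volume_real_Icc_of_le hx.le, sub_zero]

/-- The paper's `ũ`. Since `sInf` of a set that is unbounded below is `0`, it is only meaningful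
where `u` is bounded below on `Ici x`. -/
noncomputable def incReg (u : ℝ → ℝ) (x : ℝ) : ℝ :=
  sInf (u '' Ici x)

section incReg

variable {u : ℝ → ℝ}

lemma bddBelow_image_Ici_of_nonneg (hbdd : BddBelow (u '' Ici 0)) {x : ℝ} (hx : 0 ≤ x) :
    BddBelow (u '' Ici x) :=
  hbdd.mono (image_mono (Ici_subset_Ici.mpr hx))

lemma incReg_le (hbdd : BddBelow (u '' Ici 0)) {x : ℝ} (hx : 0 ≤ x) : incReg u x ≤ u x :=
  csInf_le (bddBelow_image_Ici_of_nonneg hbdd hx) (mem_image_of_mem u self_mem_Ici)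

lemma incReg_le_of_le (hbdd : BddBelow (u '' Ici 0)) {x y : ℝ} (hx : 0 ≤ x) (hxy : x ≤ y) :
    incReg u x ≤ u y :=
  csInf_le (bddBelow_image_Ici_of_nonneg hbdd hx) (mem_image_of_mem u hxy)

lemma monotoneOn_incReg (hbdd : BddBelow (u '' Ici 0)) : MonotoneOn (incReg u) (Ici 0) :=
  fun _ hx _ _ hxy =>
    csInf_le_csInf (bddBelow_image_Ici_of_nonneg hbdd hx) (nonempty_Ici.image u)
      (image_mono (Ici_subset_Ici.mpr hxy))

lemma incReg_le_add_sub (hbdd : BddBelow (u '' Ici 0))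
    (hdec : AntitoneOn (fun x => u x - x) (Ici 0))
    {x y : ℝ} (hx : 0 ≤ x) (hxy : x ≤ y) :
    incReg u y ≤ incReg u x + (y - x) := by
  have hy : 0 ≤ y := hx.trans hxy
  suffices incReg u y - (y - x) ≤ incReg u x by linarith
  refine le_csInf (nonempty_Ici.image u) ?_
  rintro _ ⟨z, hxz, rfl⟩
  have hxz : x ≤ z := hxz
  rcases le_total y z with hyz | hzy
  · linarith [incReg_le_of_le hbdd hy hyz]
  · have : u y - y ≤ u z - z := hdec (hx.trans hxz) hy hzy
    linarith [incReg_le hbdd hy]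

lemma lipschitzOnWith_incReg (hbdd : BddBelow (u '' Ici 0))
    (hdec : AntitoneOn (fun x => u x - x) (Ici 0)) :
    LipschitzOnWith 1 (incReg u) (Ici 0) := by
  refine LipschitzOnWith.of_le_add fun x hx y hy => ?_
  rcases le_total x y with hxy | hyx
  · linarith [monotoneOn_incReg hbdd hx hy hxy, dist_nonneg (x := x) (y := y)]
  · rw [Real.dist_eq, abs_of_nonneg (sub_nonneg.mpr hyx)]
    linarith [incReg_le_add_sub hbdd hdec hy hyx]

/-- If `ũ` increases strictly from `y` to `w`, the infimum defining `ũ y` is approached on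
`[y, w)`, where `u - id` dominates its value at `w`. -/
lemma sub_le_incReg_sub_of_incReg_lt (hbdd : BddBelow (u '' Ici 0))
    (hdec : AntitoneOn (fun x => u x - x) (Ici 0))
    {y w : ℝ} (hy : 0 ≤ y) (hyw : y < w)
    (hlt : incReg u y < incReg u w) : u w - w ≤ incReg u y - y := by
  have hmin : min (u w - w + y) (incReg u w) ≤ incReg u y := by
    refine le_csInf (nonempty_Ici.image u) ?_
    rintro _ ⟨z, hyz, rfl⟩
    have hyz : y ≤ z := hyz
    rcases lt_or_ge z w with hzw | hwz
    · have : u w - w ≤ u z - z := hdec (hy.trans hyz) (hy.trans hyw.le) hzw.le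
      exact (min_le_left _ _).trans (by linarith)
    · exact (min_le_right _ _).trans (incReg_le_of_le hbdd (hy.trans hyw.le) hwz)
  rcases min_le_iff.mp hmin with h | h
  · linarith
  · exact absurd h hlt.not_ge

lemma Ioo_subset_image_incReg (hbdd : BddBelow (u '' Ici 0))
    (hdec : AntitoneOn (fun x => u x - x) (Ici 0))
    {b : ℝ} (hb : 0 ≤ b) :
    Ioo (incReg u 0) (incReg u b) ⊆
      incReg u '' {y ∈ Icc 0 b | ∀ w, y < w → u w - w ≤ incReg u y - y} := by
  rintro t ⟨h0t, htb⟩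
  have hcont : ContinuousOn (incReg u) (Icc 0 b) :=
    (lipschitzOnWith_incReg hbdd hdec).continuousOn.mono Icc_subset_Ici_self
  obtain ⟨x, hx, hxt⟩ := intermediate_value_Icc hb hcont ⟨h0t.le, htb.le⟩
  have hK : IsCompact {y ∈ Icc 0 b | incReg u y = t} :=
    isCompact_Icc.of_isClosed_subset
      (hcont.preimage_isClosed_of_isClosed isClosed_Icc isClosed_singleton) (sep_subset _ _)
  obtain ⟨y, ⟨hy, hyt⟩, hlast⟩ := hK.exists_isGreatest ⟨x, hx, hxt⟩
  refine ⟨y, ⟨hy, fun w hyw => sub_le_incReg_sub_of_incReg_lt hbdd hdec hy.1 hyw ?_⟩, hyt⟩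
  have hw : 0 ≤ w := hy.1.trans hyw.le
  rw [hyt]
  rcases le_or_gt w b with hwb | hbw
  · refine lt_of_le_of_ne (hyt ▸ monotoneOn_incReg hbdd hy.1 hw hyw.le) fun hwt => ?_
    exact hyw.not_ge (hlast ⟨⟨hw, hwb⟩, hwt.symm⟩)
  · exact htb.trans_le (monotoneOn_incReg hbdd hb hw hbw.le)

lemma incReg_sub_incReg_zero_le_volume (hbdd : BddBelow (u '' Ici 0))
    (hdec : AntitoneOn (fun x => u x - x) (Ici 0))
    {b : ℝ} (hb : 0 ≤ b) :
    incReg u b - incReg u 0 ≤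
      (volume ({y | 0 ≤ y ∧ incReg u y = u y} ∩ Icc 0 b)).toReal := by
  set G := {y ∈ Icc 0 b | ∀ w, y < w → u w - w ≤ incReg u y - y}
  set D := {x | ∃ c < u x - x, ∀ y, x < y → u y - y ≤ c}
  have hG : G ⊆ ({y | 0 ≤ y ∧ incReg u y = u y} ∩ Icc 0 b) ∪ D := by
    rintro y ⟨hy, hright⟩
    rcases (incReg_le hbdd hy.1).eq_or_lt with heq | hlt
    · exact Or.inl ⟨⟨hy.1, heq⟩, hy⟩
    · exact Or.inr ⟨incReg u y - y, by linarith, hright⟩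
  have hlip : LipschitzOnWith 1 (incReg u) G :=
    (lipschitzOnWith_incReg hbdd hdec).mono fun y hy => hy.1.1
  have hfin : volume ({y | 0 ≤ y ∧ incReg u y = u y} ∩ Icc 0 b) ≠ ⊤ :=
    ((measure_mono inter_subset_right).trans_lt measure_Icc_lt_top).ne
  refine (ENNReal.ofReal_le_iff_le_toReal hfin).mp ?_
  calc ENNReal.ofReal (incReg u b - incReg u 0)
      = volume (Ioo (incReg u 0) (incReg u b)) := Real.volume_Ioo.symm
    _ ≤ volume (incReg u '' G) := measure_mono (Ioo_subset_image_incReg hbdd hdec hb)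
    _ ≤ volume G := by
      simpa [hausdorffMeasure_real] using hlip.hausdorffMeasure_image_le zero_le_one
    _ ≤ volume (({y | 0 ≤ y ∧ incReg u y = u y} ∩ Icc 0 b) ∪ D) := measure_mono hG
    _ ≤ volume ({y | 0 ≤ y ∧ incReg u y = u y} ∩ Icc 0 b) + volume D := measure_union_le _ _
    _ = volume ({y | 0 ≤ y ∧ incReg u y = u y} ∩ Icc 0 b) := by
      rw [(countable_setOf_exists_lt_forall_gt_le fun x => u x - x).measure_zero, add_zero]

lemma measurableSet_setOf_incReg_eq (hbdd : BddBelow (u '' Ici 0))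
    (hdec : AntitoneOn (fun x => u x - x) (Ici 0)) :
    MeasurableSet {x | 0 ≤ x ∧ incReg u x = u x} := by
  have hreg : Measurable fun x : Ici (0 : ℝ) => incReg u x - x :=
    (monotoneOn_iff_monotone.mp (monotoneOn_incReg hbdd)).measurable.sub measurable_subtype_coe
  have hsub : Measurable fun x : Ici (0 : ℝ) => u x - x :=
    (antitoneOn_iff_antitone.mp hdec).measurable
  have hset : {x | 0 ≤ x ∧ incReg u x = u x} =
      (↑) '' {x : Ici (0 : ℝ) | incReg u x - x = u x - x} := by
    ext x
    simp [and_comm]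
  rw [hset]
  exact measurableSet_Ici.subtype_image (measurableSet_eq_fun hreg hsub)

lemma eventually_mul_le_incReg (hpos : ∀ x ∈ Ici (0 : ℝ), 0 ≤ u x) {a : ℝ}
    (h : ∀ᶠ y in atTop, a * y ≤ u y) : ∀ᶠ x in atTop, a * x ≤ incReg u x := by
  obtain ⟨X, hX⟩ := eventually_atTop.mp h
  filter_upwards [eventually_ge_atTop (max X 0)] with x hx
  obtain ⟨hXx, hx⟩ := max_le_iff.mp hx
  refine le_csInf (nonempty_Ici.image u) ?_
  rintro _ ⟨y, hxy, rfl⟩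
  have hxy : x ≤ y := hxy
  rcases le_total 0 a with ha | ha
  · exact (mul_le_mul_of_nonneg_left hxy ha).trans (hX y (hXx.trans hxy))
  · exact (mul_nonpos_of_nonpos_of_nonneg ha hx).trans (hpos y (hx.trans hxy))

lemma liminf_div_le_liminf_volume_setOf_incReg_eq (hpos : ∀ x ∈ Ici (0 : ℝ), 0 ≤ u x)
    (hdec : AntitoneOn (fun x => u x - x) (Ici 0)) :
    liminf (fun x => u x / x) atTop ≤
      liminf (fun x => (volume ({y | 0 ≤ y ∧ incReg u y = u y} ∩ Icc 0 x)).toReal / x)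
        atTop := by
  have hbdd : BddBelow (u '' Ici 0) := ⟨0, by rintro _ ⟨x, hx, rfl⟩; exact hpos x hx⟩
  have hdensity_le_one : ∀ᶠ x in atTop,
      (volume ({y | 0 ≤ y ∧ incReg u y = u y} ∩ Icc 0 x)).toReal / x ≤ 1 := by
    filter_upwards [eventually_gt_atTop 0] with x hx
    exact volume_real_inter_Icc_zero_div_le_one _ hx
  refine liminf_le_of_le (isBoundedUnder_of_eventually_ge (a := 0) ?_) fun a ha => ?_
  · filter_upwards [eventually_ge_atTop 0] with x hx
    exact div_nonneg (hpos x hx) hx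
  refine le_of_forall_sub_le fun ε hε => le_liminf_of_le
    (isCoboundedUnder_ge_of_eventually_le atTop hdensity_le_one) ?_
  have hax : ∀ᶠ x in atTop, a * x ≤ u x := by
    filter_upwards [ha, eventually_gt_atTop 0] with x hx hx0
    exact (le_div_iff₀ hx0).mp hx
  have hsmall : ∀ᶠ x in atTop, incReg u 0 / x < ε :=
    (tendsto_const_nhds.div_atTop tendsto_id).eventually_lt_const hε
  filter_upwards [eventually_mul_le_incReg hpos hax, hsmall, eventually_gt_atTop 0]
    with x hax hsmall hx
  have hvol := incReg_sub_incReg_zero_le_volume hbdd hdec hx.le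
  have : incReg u 0 ≤ ε * x := ((div_lt_iff₀ hx).mp hsmall).le
  rw [le_div_iff₀ hx, sub_mul]
  linarith

end incReg

/-- If `u : ℝ≥0 → ℝ≥0` (modelled on `Ici 0 ⊆ ℝ`) is such that `x ↦ u x - x` is
decreasing, and `uu` is its increasing regularization, then
`S = {x ≥ 0 | uu x = u x}` is Borel and its lower density is at least
`liminf_{x→∞} u x / x`. -/
theorem stmt_1 (u : ℝ → ℝ) (hpos : ∀ x ∈ Set.Ici (0 : ℝ), 0 ≤ u x)
    (hdec : AntitoneOn (fun x => u x - x) (Set.Ici 0))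
    (uu : ℝ → ℝ) (huu : ∀ x ∈ Set.Ici (0 : ℝ), uu x = sInf (u '' Set.Ici x)) :
    MeasurableSet {x : ℝ | 0 ≤ x ∧ uu x = u x} ∧
      Filter.liminf (fun x : ℝ => u x / x) Filter.atTop ≤
        Filter.liminf
          (fun x : ℝ =>
            (MeasureTheory.volume ({y : ℝ | 0 ≤ y ∧ uu y = u y} ∩ Set.Icc 0 x)).toReal / x)
          Filter.atTop := by
  have hS : {y | 0 ≤ y ∧ uu y = u y} = {y | 0 ≤ y ∧ incReg u y = u y} := by
    ext y
    exact and_congr_right fun hy => by rw [huu y hy, incReg]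
  have hbdd : BddBelow (u '' Ici 0) := ⟨0, by rintro _ ⟨x, hx, rfl⟩; exact hpos x hx⟩
  rw [hS]
  exact ⟨measurableSet_setOf_incReg_eq hbdd hdec,
    liminf_div_le_liminf_volume_setOf_incReg_eq hpos hdec⟩
end

section
/- Let v : ℝ≥0 → ℝ≥0 be a positive decreasing function with ∫₀^∞ v(x) dx = ∞. Then for every Borel set B ⊂ ℝ≥0 with positive lower density ρ₋(B) > 0, one has ∫_B v(x) dx = ∞. -/
open Set Topology Filter MeasureTheory ENNReal

/-!
Fix `0 < a` below the lower density of `B` and `K ≥ 2 / a` with `K > 1`. For large `x`, `B` then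
has measure at least `x` in `(x, K x]`, and since `v` decreases,
`∫_{(K x, K² x]} v ≤ K (K - 1) x v (K x) ≤ K (K - 1) ∫_{B ∩ (x, K x]} v`.
Summing over the blocks `(x₀ Kⁿ, x₀ Kⁿ⁺¹]` bounds the divergent tail `∫_{(K x₀, ∞)} v`
by `K (K - 1) ∫_B v`.
-/

theorem setLIntegral_Ioc_le_of_antitoneOn {v : ℝ → ℝ} {a b : ℝ} (hv : AntitoneOn v (Ici a)) :
    ∫⁻ y in Ioc a b, ENNReal.ofReal (v y) ≤ ENNReal.ofReal (v a) * ENNReal.ofReal (b - a) := by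
  calc ∫⁻ y in Ioc a b, ENNReal.ofReal (v y)
      ≤ ∫⁻ _ in Ioc a b, ENNReal.ofReal (v a) :=
        setLIntegral_mono' measurableSet_Ioc fun y hy =>
          ENNReal.ofReal_le_ofReal (hv (mem_Ici.2 le_rfl) hy.1.le hy.1.le)
    _ = ENNReal.ofReal (v a) * ENNReal.ofReal (b - a) := by
        rw [setLIntegral_const, Real.volume_Ioc]

theorem mul_volume_le_setLIntegral_of_antitoneOn {v : ℝ → ℝ} {a c : ℝ} {s : Set ℝ}
    (hv : AntitoneOn v (Icc a c)) (hs : MeasurableSet s) (hsub : s ⊆ Icc a c) :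
    ENNReal.ofReal (v c) * volume s ≤ ∫⁻ y in s, ENNReal.ofReal (v y) := by
  rw [← setLIntegral_const]
  refine setLIntegral_mono' hs fun y hy => ENNReal.ofReal_le_ofReal ?_
  obtain ⟨hay, hyc⟩ := hsub hy
  exact hv ⟨hay, hyc⟩ ⟨hay.trans hyc, le_rfl⟩ hyc

theorem setLIntegral_Ioc_le_mul_setLIntegral_Ioc_inter {v : ℝ → ℝ} {B : Set ℝ} {x K : ℝ}
    (hv : AntitoneOn v (Ici 0)) (hB : MeasurableSet B) (hx : 0 ≤ x) (hK : 1 ≤ K)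
    (hBx : ENNReal.ofReal x ≤ volume (Ioc x (K * x) ∩ B)) :
    ∫⁻ y in Ioc (K * x) (K * (K * x)), ENNReal.ofReal (v y) ≤
      ENNReal.ofReal (K * (K - 1)) * ∫⁻ y in Ioc x (K * x) ∩ B, ENNReal.ofReal (v y) := by
  have hxKx : x ≤ K * x := le_mul_of_one_le_left hx hK
  calc ∫⁻ y in Ioc (K * x) (K * (K * x)), ENNReal.ofReal (v y)
      ≤ ENNReal.ofReal (v (K * x)) * ENNReal.ofReal (K * (K * x) - K * x) :=
        setLIntegral_Ioc_le_of_antitoneOn (hv.mono (Ici_subset_Ici.2 (hx.trans hxKx)))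
    _ = ENNReal.ofReal (K * (K - 1)) * (ENNReal.ofReal (v (K * x)) * ENNReal.ofReal x) := by
        rw [show K * (K * x) - K * x = K * (K - 1) * x by ring,
          ENNReal.ofReal_mul (by nlinarith)]
        ring
    _ ≤ ENNReal.ofReal (K * (K - 1)) * ∫⁻ y in Ioc x (K * x) ∩ B, ENNReal.ofReal (v y) := by
        gcongr
        calc ENNReal.ofReal (v (K * x)) * ENNReal.ofReal x
            ≤ ENNReal.ofReal (v (K * x)) * volume (Ioc x (K * x) ∩ B) := by gcongr
          _ ≤ ∫⁻ y in Ioc x (K * x) ∩ B, ENNReal.ofReal (v y) :=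
            mul_volume_le_setLIntegral_of_antitoneOn (hv.mono fun y hy => hx.trans hy.1)
              (measurableSet_Ioc.inter hB) (inter_subset_left.trans Ioc_subset_Icc_self)

theorem measure_Ioi_le_mul_of_measure_Ioc_le {α : Type*} [MeasurableSpace α] [LinearOrder α]
    [TopologicalSpace α] [OrderClosedTopology α] [OpensMeasurableSpace α] {μ ν : Measure α}
    {u w : ℕ → α} (hu : Monotone u) (hu' : ¬BddAbove (range u)) (hw : Monotone w)
    (hw' : ¬BddAbove (range w)) {C : ℝ≥0∞}
    (h : ∀ n, μ (Ioc (w n) (w (n + 1))) ≤ C * ν (Ioc (u n) (u (n + 1)))) :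
    μ (Ioi (w 0)) ≤ C * ν (Ioi (u 0)) := by
  have hunion : ∀ {f : ℕ → α}, Monotone f → ¬BddAbove (range f) →
      ⋃ n, Ioc (f n) (f (n + 1)) = Ioi (f 0) := fun hf hf' => by
    simpa using iUnion_Ioc_map_succ_eq_Ioi (fun n => hf (Nat.zero_le n)) hf'
  have hdisj : ∀ {f : ℕ → α}, Monotone f →
      Pairwise (Function.onFun Disjoint fun n => Ioc (f n) (f (n + 1))) :=
    fun hf => by simpa using hf.pairwise_disjoint_on_Ioc_succ
  calc μ (Ioi (w 0)) = ∑' n, μ (Ioc (w n) (w (n + 1))) := by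
        rw [← hunion hw hw', measure_iUnion (hdisj hw) fun _ => measurableSet_Ioc]
    _ ≤ ∑' n, C * ν (Ioc (u n) (u (n + 1))) := ENNReal.tsum_le_tsum h
    _ = C * ν (Ioi (u 0)) := by
        rw [ENNReal.tsum_mul_left, ← measure_iUnion (hdisj hu)
          fun _ => measurableSet_Ioc, hunion hu hu']

theorem exists_pos_eventually_ofReal_mul_le_volume_inter_Icc {B : Set ℝ}
    (hρ : 0 < liminf (fun x : ℝ => (volume (B ∩ Icc 0 x)).toReal / x) atTop) :
    ∃ a > 0, ∀ᶠ x in atTop, ENNReal.ofReal (a * x) ≤ volume (B ∩ Icc 0 x) := by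
  have hbdd : IsBoundedUnder (· ≥ ·) atTop fun x : ℝ => (volume (B ∩ Icc 0 x)).toReal / x :=
    isBoundedUnder_of_eventually_ge <| (eventually_ge_atTop 0).mono fun x hx => by positivity
  refine ⟨_, half_pos hρ, ?_⟩
  filter_upwards [eventually_lt_of_lt_liminf (half_lt_self hρ) hbdd, eventually_gt_atTop 0]
    with x hx hx0
  calc ENNReal.ofReal (_ * x) ≤ ENNReal.ofReal (volume (B ∩ Icc 0 x)).toReal :=
        ENNReal.ofReal_le_ofReal ((lt_div_iff₀ hx0).1 hx).le
    _ ≤ volume (B ∩ Icc 0 x) := ENNReal.ofReal_toReal_le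

theorem eventually_ofReal_le_volume_Ioc_inter {B : Set ℝ} {a K : ℝ} (ha : 0 < a)
    (hK : 2 ≤ a * K) (hB : ∀ᶠ x in atTop, ENNReal.ofReal (a * x) ≤ volume (B ∩ Icc 0 x)) :
    ∀ᶠ x in atTop, ENNReal.ofReal x ≤ volume (Ioc x (K * x) ∩ B) := by
  have hK0 : 0 < K := pos_of_mul_pos_right (by linarith) ha.le
  filter_upwards [tendsto_id.const_mul_atTop hK0 |>.eventually hB, eventually_ge_atTop 0]
    with x hKx hx
  refine (ENNReal.add_le_add_iff_right (ENNReal.ofReal_ne_top (r := x))).1 ?_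
  calc ENNReal.ofReal x + ENNReal.ofReal x = ENNReal.ofReal (2 * x) := by
        rw [← ENNReal.ofReal_add hx hx, two_mul]
    _ ≤ ENNReal.ofReal (a * (K * x)) := ENNReal.ofReal_le_ofReal (by nlinarith)
    _ ≤ volume (B ∩ Icc 0 (K * x)) := hKx
    _ ≤ volume (Ioc x (K * x) ∩ B ∪ Icc 0 x) := by
        refine measure_mono fun y ⟨hyB, hy0, hyK⟩ => ?_
        rcases le_or_gt y x with hyx | hxy
        exacts [Or.inr ⟨hy0, hyx⟩, Or.inl ⟨⟨hxy, hyK⟩, hyB⟩]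
    _ ≤ volume (Ioc x (K * x) ∩ B) + ENNReal.ofReal x :=
        (measure_union_le _ _).trans_eq (by rw [Real.volume_Icc, sub_zero])

theorem exists_forall_ofReal_le_volume_Ioc_mul_inter {B : Set ℝ}
    (hρ : 0 < liminf (fun x : ℝ => (volume (B ∩ Icc 0 x)).toReal / x) atTop) :
    ∃ K > 1, ∃ x₀ > 0, ∀ x ≥ x₀, ENNReal.ofReal x ≤ volume (Ioc x (K * x) ∩ B) := by
  obtain ⟨a, ha, hBa⟩ := exists_pos_eventually_ofReal_mul_le_volume_inter_Icc hρ
  have haK : 2 ≤ a * max 2 (2 / a) :=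
    (mul_div_cancel₀ 2 ha.ne').symm.le.trans (by gcongr; exact le_max_right _ _)
  obtain ⟨x₁, h⟩ := (eventually_ofReal_le_volume_Ioc_inter ha haK hBa).exists_forall_of_atTop
  exact ⟨_, one_lt_two.trans_le (le_max_left _ _), max x₁ 1, by positivity,
    fun x hx => h x (le_of_max_le_left hx)⟩

theorem setLIntegral_Ioi_eq_top_of_antitoneOn {v : ℝ → ℝ} {b : ℝ} (hv : AntitoneOn v (Ici 0))
    (hdiv : ∫⁻ x in Ioi 0, ENNReal.ofReal (v x) = ⊤) (hb : 0 ≤ b) :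
    ∫⁻ x in Ioi b, ENNReal.ofReal (v x) = ⊤ := by
  have hhead : ∫⁻ x in Ioc 0 b, ENNReal.ofReal (v x) ≠ ⊤ :=
    ne_top_of_le_ne_top (mul_ne_top ofReal_ne_top ofReal_ne_top)
      (setLIntegral_Ioc_le_of_antitoneOn hv)
  have hsplit := lintegral_union_le (μ := volume) (fun x => ENNReal.ofReal (v x)) (Ioc 0 b) (Ioi b)
  rw [Ioc_union_Ioi_eq_Ioi hb, hdiv, top_le_iff, add_eq_top] at hsplit
  exact hsplit.resolve_left hhead

theorem stmt_2_general (v : ℝ → ℝ)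
    (hdec : AntitoneOn v (Set.Ici 0))
    (hdiv : (∫⁻ x in Set.Ioi (0 : ℝ), ENNReal.ofReal (v x)) = ⊤)
    (B : Set ℝ) (hB : MeasurableSet B)
    (hρ : 0 < Filter.liminf
      (fun x : ℝ => (MeasureTheory.volume (B ∩ Set.Icc 0 x)).toReal / x) Filter.atTop) :
    (∫⁻ x in B, ENNReal.ofReal (v x)) = ⊤ := by
  obtain ⟨K, hK, x₀, hx₀, hBx₀⟩ := exists_forall_ofReal_le_volume_Ioc_mul_inter hρ
  set μ := volume.withDensity fun x => ENNReal.ofReal (v x)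
  have hμ : ∀ s, μ s = ∫⁻ x in s, ENNReal.ofReal (v x) := withDensity_apply' _
  set u : ℕ → ℝ := fun n => x₀ * K ^ n
  have hu : Monotone u := fun _ _ hmn =>
    mul_le_mul_of_nonneg_left (pow_le_pow_right₀ hK.le hmn) hx₀.le
  have hu_ge : ∀ n, x₀ ≤ u n := fun n => le_mul_of_one_le_right hx₀.le (one_le_pow₀ hK.le)
  have hu_succ : ∀ n, u (n + 1) = K * u n := fun n => by simp only [u]; ring
  have hu_top : Tendsto u atTop atTop :=
    (tendsto_pow_atTop_atTop_of_one_lt hK).const_mul_atTop hx₀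
  have htail : μ (Ioi (u 1)) ≤ ENNReal.ofReal (K * (K - 1)) * μ.restrict B (Ioi (u 0)) := by
    refine measure_Ioi_le_mul_of_measure_Ioc_le (w := fun n => u (n + 1)) hu
      (not_bddAbove_of_tendsto_atTop hu_top) (hu.comp fun _ _ h => Nat.add_le_add_right h 1)
      (not_bddAbove_of_tendsto_atTop (hu_top.comp (tendsto_add_atTop_nat 1))) fun n => ?_
    rw [hμ, Measure.restrict_apply measurableSet_Ioc, hμ]
    simpa only [hu_succ] using setLIntegral_Ioc_le_mul_setLIntegral_Ioc_inter hdec hB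
      (hx₀.le.trans (hu_ge n)) hK.le (hBx₀ _ (hu_ge n))
  rw [hμ, setLIntegral_Ioi_eq_top_of_antitoneOn hdec hdiv (hx₀.le.trans (hu_ge 1)), top_le_iff,
    mul_eq_top, or_iff_left (by simp)] at htail
  rw [← hμ, ← Measure.restrict_apply_univ, eq_top_iff, ← htail.2]
  exact measure_mono (subset_univ _)

/-- If `v` is positive and decreasing on `[0,∞)` with divergent integral, then its
integral over any Borel set of positive lower density also diverges. -/
theorem stmt_2 (v : ℝ → ℝ) (hpos : ∀ x ∈ Set.Ici (0 : ℝ), 0 < v x)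
    (hdec : AntitoneOn v (Set.Ici 0))
    (hdiv : (∫⁻ x in Set.Ioi (0 : ℝ), ENNReal.ofReal (v x)) = ⊤)
    (B : Set ℝ) (hB : MeasurableSet B) (hB0 : B ⊆ Set.Ici 0)
    (hρ : 0 < Filter.liminf
      (fun x : ℝ => (MeasureTheory.volume (B ∩ Set.Icc 0 x)).toReal / x) Filter.atTop) :
    (∫⁻ x in B, ENNReal.ofReal (v x)) = ⊤ :=
  stmt_2_general v hdec hdiv B hB hρ
end

section
/- Let γ > 0 and let w : (0,∞) → (0,∞) be an increasing differentiable function such that t ↦ w(t^γ) is concave (equivalently, t ↦ w'(t) t^{1−1/γ} is decreasing). Then for all t, s > 0: w(t+s)² − w(t)² ≤ 2γ w(t+s) w'(t) t ((1 + s/t)^{1/γ} − 1). -/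
open Set

/-!
Put `a = w'(t) t^{1-1/γ}`. Since `u ↦ w'(u) u^{1-1/γ}` is decreasing, `w'(u) ≤ a u^{1/γ-1}`,
the derivative of `γ a u^{1/γ}`, for `u ≥ t`; comparing derivatives on `[t, t+s]` gives
`w(t+s) - w(t) ≤ γ a ((t+s)^{1/γ} - t^{1/γ}) = γ w'(t) t ((1+s/t)^{1/γ} - 1)`.
The square difference is then bounded by `w(t+s)² - w(t)² ≤ 2 w(t+s) (w(t+s) - w(t))`,
which is `(w(t+s) - w(t))² ≥ 0`.
-/

theorem sub_le_sub_of_hasDerivAt_le {f g f' g' : ℝ → ℝ} {a b : ℝ} (hab : a ≤ b)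
    (hf : ∀ x ∈ Icc a b, HasDerivAt f (f' x) x) (hg : ∀ x ∈ Icc a b, HasDerivAt g (g' x) x)
    (hle : ∀ x ∈ Ioo a b, f' x ≤ g' x) :
    f b - f a ≤ g b - g a := by
  have hd : ∀ x ∈ Icc a b, HasDerivAt (g - f) (g' x - f' x) x :=
    fun x hx ↦ (hg x hx).sub (hf x hx)
  have hmono : MonotoneOn (g - f) (Icc a b) := by
    refine monotoneOn_of_hasDerivWithinAt_nonneg (f' := fun x ↦ g' x - f' x) (convex_Icc a b)
      (fun x hx ↦ (hd x hx).continuousAt.continuousWithinAt) (fun x hx ↦ ?_) (fun x hx ↦ ?_)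
    · rw [interior_Icc] at hx
      exact (hd x (Ioo_subset_Icc_self hx)).hasDerivWithinAt
    · rw [interior_Icc] at hx
      exact sub_nonneg.2 (hle x hx)
  have := hmono (left_mem_Icc.2 hab) (right_mem_Icc.2 hab) hab
  simp only [Pi.sub_apply] at this
  linarith

theorem le_mul_rpow_neg_of_antitoneOn_mul_rpow {g : ℝ → ℝ} {p t u : ℝ}
    (hg : AntitoneOn (fun u ↦ g u * u ^ p) (Ioi 0)) (ht : 0 < t) (htu : t ≤ u) :
    g u ≤ g t * t ^ p * u ^ (-p) := by
  have hu : 0 < u := ht.trans_le htu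
  calc g u = g u * u ^ p * u ^ (-p) := by
        rw [mul_assoc, ← Real.rpow_add hu, add_neg_cancel, Real.rpow_zero, mul_one]
    _ ≤ g t * t ^ p * u ^ (-p) := by
        gcongr ?_ * _
        exact hg ht hu htu

theorem sub_le_of_antitoneOn_deriv_mul_rpow {γ : ℝ} (hγ : 0 < γ) {w w' : ℝ → ℝ}
    (hderiv : ∀ u ∈ Ioi (0 : ℝ), HasDerivAt w (w' u) u)
    (hconc : AntitoneOn (fun u ↦ w' u * u ^ (1 - 1 / γ)) (Ioi 0))
    {t t' : ℝ} (ht : 0 < t) (htt' : t ≤ t') :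
    w t' - w t ≤ γ * (w' t * t ^ (1 - 1 / γ)) * (t' ^ (1 / γ) - t ^ (1 / γ)) := by
  set a := w' t * t ^ (1 - 1 / γ)
  have hpos : ∀ u ∈ Icc t t', 0 < u := fun u hu ↦ ht.trans_le hu.1
  have hpow : ∀ u ∈ Icc t t',
      HasDerivAt (fun u ↦ γ * a * u ^ (1 / γ)) (a * u ^ (1 / γ - 1)) u := by
    intro u hu
    refine ((Real.hasDerivAt_rpow_const (Or.inl (hpos u hu).ne')).const_mul (γ * a)).congr_deriv
      ?_
    field_simp
  rw [mul_sub]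
  refine sub_le_sub_of_hasDerivAt_le htt' (fun u hu ↦ hderiv u (hpos u hu)) hpow fun u hu ↦ ?_
  convert le_mul_rpow_neg_of_antitoneOn_mul_rpow hconc ht hu.1.le using 3
  ring

theorem rpow_one_sub_mul_add_rpow_sub_rpow {t s : ℝ} (ht : 0 < t) (hts : 0 ≤ t + s) (p : ℝ) :
    t ^ (1 - p) * ((t + s) ^ p - t ^ p) = t * ((1 + s / t) ^ p - 1) := by
  have hsplit : t + s = t * (1 + s / t) := by field_simp
  have hnonneg : 0 ≤ 1 + s / t := by
    rw [hsplit] at hts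
    exact nonneg_of_mul_nonneg_right hts ht
  rw [hsplit, Real.mul_rpow ht.le hnonneg, ← mul_sub_one, ← mul_assoc, ← Real.rpow_add ht,
    sub_add_cancel, Real.rpow_one]

theorem stmt_4_general (γ : ℝ) (hγ : 0 < γ) (w w' : ℝ → ℝ)
    (hpos : ∀ t ∈ Set.Ioi (0 : ℝ), 0 < w t)
    (hderiv : ∀ t ∈ Set.Ioi (0 : ℝ), HasDerivAt w (w' t) t)
    (hconc : AntitoneOn (fun u => w' u * u ^ (1 - 1 / γ)) (Set.Ioi 0))
    (t s : ℝ) (ht : 0 < t) (hs : 0 < s) :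
    w (t + s) ^ 2 - w t ^ 2 ≤
      2 * γ * w (t + s) * w' t * t * ((1 + s / t) ^ (1 / γ) - 1) := by
  have hts : 0 < t + s := by linarith
  have hincr : w (t + s) - w t ≤ γ * w' t * (t * ((1 + s / t) ^ (1 / γ) - 1)) := by
    rw [← rpow_one_sub_mul_add_rpow_sub_rpow ht hts.le]
    linarith [sub_le_of_antitoneOn_deriv_mul_rpow hγ hderiv hconc ht
      (le_add_of_nonneg_right hs.le)]
  calc w (t + s) ^ 2 - w t ^ 2 ≤ 2 * w (t + s) * (w (t + s) - w t) := by
        linarith [two_mul_le_add_sq (w (t + s)) (w t)]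
    _ ≤ 2 * w (t + s) * (γ * w' t * (t * ((1 + s / t) ^ (1 / γ) - 1))) := by
        have := hpos _ hts
        gcongr
    _ = 2 * γ * w (t + s) * w' t * t * ((1 + s / t) ^ (1 / γ) - 1) := by ring

/-- If `w : (0,∞) → (0,∞)` is increasing, differentiable, and `u ↦ w'(u) u^{1-1/γ}`
is decreasing, then `w(t+s)² − w(t)² ≤ 2γ w(t+s) w'(t) t ((1+s/t)^{1/γ} − 1)`. -/
theorem stmt_4 (γ : ℝ) (hγ : 0 < γ) (w w' : ℝ → ℝ)
    (hpos : ∀ t ∈ Set.Ioi (0 : ℝ), 0 < w t)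
    (hmono : MonotoneOn w (Set.Ioi 0))
    (hderiv : ∀ t ∈ Set.Ioi (0 : ℝ), HasDerivAt w (w' t) t)
    (hconc : AntitoneOn (fun u => w' u * u ^ (1 - 1 / γ)) (Set.Ioi 0))
    (t s : ℝ) (ht : 0 < t) (hs : 0 < s) :
    w (t + s) ^ 2 - w t ^ 2 ≤
      2 * γ * w (t + s) * w' t * t * ((1 + s / t) ^ (1 / γ) - 1) :=
  stmt_4_general γ hγ w w' hpos hderiv hconc t s ht hs
end

section
/- Let γ > 0 and let w : (0,∞) → (0,∞) be an increasing differentiable function such that t ↦ w'(t) t^{1−1/γ} is decreasing and t ↦ w(t)/t^{1/γ} is decreasing. Then for all t, s > 0: log w(t+s) − log w(t) ≤ t w'(t) (1 + s/t)^{1/γ} log(1 + s/t) / w(t+s). -/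
/-!
Write `p = 1/γ` and `C = w'(t) t^(1-p) (t+s)^p / w(t+s)`. For `t ≤ u ≤ t+s` the two
antitonicity hypotheses give `w'(u) u^(1-p) ≤ w'(t) t^(1-p)` and `w(t+s) u^p ≤ w(u) (t+s)^p`;
since `w'(t) ≥ 0` and `u^(1-p) u^p = u`, together they bound the logarithmic derivative:
`w'(u)/w(u) ≤ C/u`. Comparing `log ∘ w` with `C log` on `[t, t+s]` then gives
`log w(t+s) - log w(t) ≤ C log(1 + s/t)`, and `C = t w'(t) (1 + s/t)^p / w(t+s)`.
-/

open Set Real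

lemma rpow_one_sub_mul_rpow {a b : ℝ} (ha : 0 < a) (hb : 0 ≤ b) (p : ℝ) :
    a ^ (1 - p) * b ^ p = a * (b / a) ^ p := by
  rw [div_rpow hb ha.le, rpow_sub ha, rpow_one]
  field_simp

lemma sub_le_mul_log_sub_log_of_hasDerivAt_le {f f' : ℝ → ℝ} {a b C : ℝ} (ha : 0 < a)
    (hab : a ≤ b) (hf : ∀ u ∈ Icc a b, HasDerivAt f (f' u) u)
    (hf' : ∀ u ∈ Ioo a b, f' u ≤ C / u) :
    f b - f a ≤ C * (log b - log a) := by
  have hg : ∀ u ∈ Icc a b, HasDerivAt (fun u => C * log u - f u) (C * u⁻¹ - f' u) u :=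
    fun u hu => ((hasDerivAt_log (ha.trans_le hu.1).ne').const_mul C).sub (hf u hu)
  have hmono : MonotoneOn (fun u => C * log u - f u) (Icc a b) := by
    refine monotoneOn_of_hasDerivWithinAt_nonneg (convex_Icc a b)
      (fun u hu => (hg u hu).continuousAt.continuousWithinAt)
      (fun u hu => (hg u (interior_subset hu)).hasDerivWithinAt) fun u hu => ?_
    rw [interior_Icc] at hu
    rw [sub_nonneg, ← div_eq_mul_inv]
    exact hf' u hu
  have hends := hmono (left_mem_Icc.2 hab) (right_mem_Icc.2 hab) hab
  simp only at hends
  linarith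

lemma div_le_of_antitoneOn_mul_rpow_of_antitoneOn_div_rpow {w w' : ℝ → ℝ} {p t u b : ℝ}
    (hdec1 : AntitoneOn (fun u => w' u * u ^ (1 - p)) (Ioi 0))
    (hdec2 : AntitoneOn (fun u => w u / u ^ p) (Ioi 0))
    (hw't : 0 ≤ w' t) (hwu : 0 < w u) (hwb : 0 < w b) (ht : 0 < t) (htu : t ≤ u) (hub : u ≤ b) :
    w' u / w u ≤ w' t * t ^ (1 - p) * b ^ p / w b / u := by
  have hu : 0 < u := ht.trans_le htu
  have hb : 0 < b := hu.trans_le hub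
  have h1 : w' u * u ^ (1 - p) ≤ w' t * t ^ (1 - p) := hdec1 ht hu htu
  have h2 : w b * u ^ p ≤ w u * b ^ p := by
    have hub' := hdec2 hu hb hub
    simp only at hub'
    rwa [div_le_div_iff₀ (by positivity) (by positivity)] at hub'
  have hsplit : u ^ (1 - p) * u ^ p = u := by rw [← rpow_add hu, sub_add_cancel, rpow_one]
  rw [div_div, div_le_div_iff₀ hwu (by positivity)]
  calc w' u * (w b * u) = (w' u * u ^ (1 - p)) * (w b * u ^ p) := by
        linear_combination (-(w' u * w b)) * hsplit
    _ ≤ (w' t * t ^ (1 - p)) * (w u * b ^ p) :=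
      mul_le_mul h1 h2 (by positivity) (by positivity)
    _ = w' t * t ^ (1 - p) * b ^ p * w u := by ring

theorem stmt_5_general (γ : ℝ) (w w' : ℝ → ℝ)
    (hpos : ∀ t ∈ Set.Ioi (0 : ℝ), 0 < w t)
    (hmono : MonotoneOn w (Set.Ioi 0))
    (hderiv : ∀ t ∈ Set.Ioi (0 : ℝ), HasDerivAt w (w' t) t)
    (hdec1 : AntitoneOn (fun u => w' u * u ^ (1 - 1 / γ)) (Set.Ioi 0))
    (hdec2 : AntitoneOn (fun u => w u / u ^ (1 / γ)) (Set.Ioi 0))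
    (t s : ℝ) (ht : 0 < t) (hs : 0 < s) :
    Real.log (w (t + s)) - Real.log (w t) ≤
      t * w' t * (1 + s / t) ^ (1 / γ) * Real.log (1 + s / t) / w (t + s) := by
  have hts : 0 < t + s := by linarith
  have hw't : 0 ≤ w' t := (hderiv t ht).hasDerivWithinAt.nonneg_of_monotoneOn
    (uniqueDiffWithinAt_iff_accPt.mp (isOpen_Ioi.uniqueDiffWithinAt ht)) hmono
  have hlog := sub_le_mul_log_sub_log_of_hasDerivAt_le (f := fun u => log (w u)) ht
    (le_add_of_nonneg_right hs.le)
    (fun u hu => (hderiv u (ht.trans_le hu.1)).log (hpos u (ht.trans_le hu.1)).ne')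
    (fun u hu => div_le_of_antitoneOn_mul_rpow_of_antitoneOn_div_rpow hdec1 hdec2 hw't
      (hpos u (ht.trans hu.1)) (hpos _ hts) ht hu.1.le hu.2.le)
  have hratio : (t + s) / t = 1 + s / t := by field_simp
  have hpow := rpow_one_sub_mul_rpow ht hts.le (1 / γ)
  rw [hratio] at hpow
  calc _ ≤ _ := hlog
    _ = _ := by
      rw [← log_div hts.ne' ht.ne', hratio, mul_assoc (w' t), hpow]
      ring

/-- If `w : (0,∞) → (0,∞)` is increasing, differentiable, `u ↦ w'(u) u^{1-1/γ}`
decreasing and `u ↦ w(u)/u^{1/γ}` decreasing, then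
`log w(t+s) − log w(t) ≤ t w'(t) (1+s/t)^{1/γ} log(1+s/t) / w(t+s)`. -/
theorem stmt_5 (γ : ℝ) (hγ : 0 < γ) (w w' : ℝ → ℝ)
    (hpos : ∀ t ∈ Set.Ioi (0 : ℝ), 0 < w t)
    (hmono : MonotoneOn w (Set.Ioi 0))
    (hderiv : ∀ t ∈ Set.Ioi (0 : ℝ), HasDerivAt w (w' t) t)
    (hdec1 : AntitoneOn (fun u => w' u * u ^ (1 - 1 / γ)) (Set.Ioi 0))
    (hdec2 : AntitoneOn (fun u => w u / u ^ (1 / γ)) (Set.Ioi 0))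
    (t s : ℝ) (ht : 0 < t) (hs : 0 < s) :
    Real.log (w (t + s)) - Real.log (w t) ≤
      t * w' t * (1 + s / t) ^ (1 / γ) * Real.log (1 + s / t) / w (t + s) :=
  stmt_5_general γ w w' hpos hmono hderiv hdec1 hdec2 t s ht hs
end

section
/- Let E ⊂ 𝕋 be a generalized Cantor set constructed from lengths (l_n) with λ := sup_n l_{n+1}/l_n < 1/2. Then |E_t| = O(t^μ) as t → 0, where μ = 1 − log 2 / log(1/λ) and E_t is the closed t-neighborhood of E in arclength distance. -/
/-!
At stage `n` the Cantor set is covered by `2ⁿ` arcs of length `lₙ ≤ λⁿ l₀`, so its closed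
`t`-neighbourhood has measure at most `2ⁿ (lₙ + 2t)`. Choosing `n` with `λⁿ l₀ ≤ t ≤ λⁿ⁻¹ l₀`
makes `lₙ + 2t ≤ 3t`, while `2 = (1/λ)^(1 - μ)` turns `2ⁿ⁻¹ ≤ (l₀/t)^(1 - μ)`; together
`|E_t| ≤ 6 l₀^(1 - μ) t^μ`.
-/

open Set Metric MeasureTheory

/-- The generalized Cantor set in `ℝ` associated to lengths `(l_n)`. -/
def genCantorSet (l : ℕ → ℝ) : Set ℝ :=
  ⋂ n : ℕ, ⋃ s : Fin n → Bool,
    Set.Icc (∑ k : Fin n, if s k then l k.val - l (k.val + 1) else 0)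
      ((∑ k : Fin n, if s k then l k.val - l (k.val + 1) else 0) + l n)

namespace AddCircle

variable {p : ℝ}

lemma dist_coe_le_dist (x y : ℝ) : dist (x : AddCircle p) y ≤ dist x y := by
  rw [dist_eq_norm, dist_eq_norm, ← coe_sub]
  exact QuotientAddGroup.norm_mk_le_norm

variable [Fact (0 < p)]

lemma volume_setOf_infDist_image_le {ι : Type*} [Fintype ι] {K : Set ℝ} (hK : IsCompact K)
    (hne : K.Nonempty) {a : ι → ℝ} {L t : ℝ} (hcov : K ⊆ ⋃ i, Icc (a i) (a i + L)) :
    volume {ζ : AddCircle p | infDist ζ (((↑) : ℝ → AddCircle p) '' K) ≤ t}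
      ≤ ENNReal.ofReal (Fintype.card ι * (L + 2 * t)) := by
  have hcover : {ζ : AddCircle p | infDist ζ (((↑) : ℝ → AddCircle p) '' K) ≤ t} ⊆
      ⋃ i, closedBall ((a i + L / 2 : ℝ) : AddCircle p) (L / 2 + t) := by
    intro ζ hζ
    have hK' : IsCompact (((↑) : ℝ → AddCircle p) '' K) := hK.image (AddCircle.continuous_mk' p)
    obtain ⟨_, ⟨x, hxK, rfl⟩, hdist⟩ := hK'.exists_infDist_eq_dist (hne.image _) ζ
    obtain ⟨i, hxi⟩ := mem_iUnion.mp (hcov hxK)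
    have hx_center : dist (x : AddCircle p) (a i + L / 2 : ℝ) ≤ L / 2 := by
      refine (dist_coe_le_dist _ _).trans ?_
      rw [Real.dist_eq, abs_le]
      constructor <;> linarith [hxi.1, hxi.2]
    refine mem_iUnion.mpr ⟨i, ?_⟩
    calc dist ζ (a i + L / 2 : ℝ) ≤ dist ζ x + dist (x : AddCircle p) (a i + L / 2 : ℝ) :=
          dist_triangle _ _ _
      _ ≤ L / 2 + t := by rw [← hdist]; linarith [hζ.out]
  calc _ ≤ volume (⋃ i, closedBall ((a i + L / 2 : ℝ) : AddCircle p) (L / 2 + t)) :=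
        measure_mono hcover
    _ ≤ ∑ i, volume (closedBall ((a i + L / 2 : ℝ) : AddCircle p) (L / 2 + t)) :=
        measure_iUnion_fintype_le _ _
    _ = Fintype.card ι • ENNReal.ofReal (min p (2 * (L / 2 + t))) := by
        simp only [volume_closedBall, Finset.sum_const, Finset.card_univ]
    _ ≤ ENNReal.ofReal (Fintype.card ι * (L + 2 * t)) := by
        rw [nsmul_eq_mul, ENNReal.ofReal_mul (Nat.cast_nonneg _), ENNReal.ofReal_natCast]
        gcongr
        linarith [min_le_right p (2 * (L / 2 + t))]

end AddCircle

namespace GenCantor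

variable {l : ℕ → ℝ}

def stageLeft (l : ℕ → ℝ) (n : ℕ) (s : Fin n → Bool) : ℝ :=
  ∑ k : Fin n, if s k then l k.val - l (k.val + 1) else 0

lemma genCantorSet_subset_iUnion_Icc (n : ℕ) :
    genCantorSet l ⊆ ⋃ s : Fin n → Bool, Icc (stageLeft l n s) (stageLeft l n s + l n) :=
  fun _ hx => mem_iInter.mp hx n

lemma isCompact_genCantorSet : IsCompact (genCantorSet l) := by
  have hsub : genCantorSet l ⊆ Icc 0 (l 0) := by
    simpa [stageLeft, iUnion_const] using genCantorSet_subset_iUnion_Icc (l := l) 0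
  exact isCompact_Icc.of_isClosed_subset
    (isClosed_iInter fun _ => isClosed_iUnion_of_finite fun _ => isClosed_Icc) hsub

lemma zero_mem_genCantorSet (hl : ∀ n, 0 ≤ l n) : (0 : ℝ) ∈ genCantorSet l :=
  mem_iInter.mpr fun n => mem_iUnion.mpr ⟨fun _ => false, by simp [hl n]⟩

lemma le_pow_mul_of_div_le {lam : ℝ} (hl : ∀ n, 0 < l n) (hub : ∀ n, l (n + 1) / l n ≤ lam)
    (n : ℕ) : l n ≤ lam ^ n * l 0 := by
  induction n with
  | zero => simp
  | succ n ih =>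
    have hstep : l (n + 1) ≤ lam * l n := (div_le_iff₀ (hl n)).mp (hub n)
    have hlam : 0 ≤ lam := (div_pos (hl (n + 1)) (hl n)).le.trans (hub n)
    calc l (n + 1) ≤ lam * l n := hstep
      _ ≤ lam * (lam ^ n * l 0) := by gcongr
      _ = lam ^ (n + 1) * l 0 := by ring

end GenCantor

lemma exists_pow_mul_le_and_two_pow_le {lam L t : ℝ} (hlam0 : 0 < lam) (hlam1 : lam < 1)
    (ht : 0 < t) (htL : t ≤ L) :
    ∃ n : ℕ, lam ^ n * L ≤ t ∧ (2 : ℝ) ^ n ≤ 2 * (L / t) ^ (Real.log 2 / Real.log (1 / lam)) := by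
  have hb : 1 < 1 / lam := by rw [lt_div_iff₀ hlam0]; linarith
  obtain ⟨m, hm_le, hm_lt⟩ := exists_nat_pow_near ((one_le_div ht).mpr htL) hb
  refine ⟨m + 1, ?_, ?_⟩
  · rw [div_pow, one_pow, div_lt_div_iff₀ ht (pow_pos hlam0 _), one_mul] at hm_lt
    linarith
  · have htwo : (1 / lam) ^ (Real.log 2 / Real.log (1 / lam)) = 2 :=
      Real.rpow_logb (by positivity) hb.ne' two_pos
    calc (2 : ℝ) ^ (m + 1) = 2 * ((1 / lam) ^ m) ^ (Real.log 2 / Real.log (1 / lam)) := by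
          rw [← Real.rpow_pow_comm (by positivity), htwo, pow_succ']
      _ ≤ 2 * (L / t) ^ (Real.log 2 / Real.log (1 / lam)) := by
          gcongr
          exact div_nonneg (Real.log_nonneg one_le_two) (Real.log_nonneg hb.le)

open GenCantor in
theorem stmt_13_general [Fact (0 < 2 * Real.pi)]
    (l : ℕ → ℝ) (lam : ℝ) (hl : ∀ n, 0 < l n)
    (hub : ∀ n, l (n + 1) / l n ≤ lam) (hlam : lam < 1 / 2) :
    ∃ C > (0 : ℝ), ∃ t₀ > (0 : ℝ), ∀ t ∈ Set.Ioo (0 : ℝ) t₀,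
      (volume {ζ : AddCircle (2 * Real.pi) |
          Metric.infDist ζ ((fun x : ℝ => (x : AddCircle (2 * Real.pi))) '' genCantorSet l) ≤ t}).toReal ≤
        C * t ^ (1 - Real.log 2 / Real.log (1 / lam)) := by
  set α := Real.log 2 / Real.log (1 / lam)
  have hlam0 : 0 < lam := (div_pos (hl 1) (hl 0)).trans_le (hub 0)
  refine ⟨6 * l 0 ^ α, by have := hl 0; positivity, l 0, hl 0, ?_⟩
  rintro t ⟨ht, htl⟩
  obtain ⟨n, hn_len, hn_pow⟩ := exists_pow_mul_le_and_two_pow_le hlam0 (by linarith) ht htl.le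
  have hvol := AddCircle.volume_setOf_infDist_image_le (p := 2 * Real.pi) (t := t)
    isCompact_genCantorSet ⟨0, zero_mem_genCantorSet fun n => (hl n).le⟩ (genCantorSet_subset_iUnion_Icc n)
  rw [Fintype.card_fun, Fintype.card_bool, Fintype.card_fin, Nat.cast_pow, Nat.cast_two] at hvol
  have hln : l n + 2 * t ≤ 3 * t := by linarith [le_pow_mul_of_div_le hl hub n]
  calc _ ≤ (2 : ℝ) ^ n * (l n + 2 * t) :=
        ENNReal.toReal_le_of_le_ofReal (by have := hl n; positivity) hvol
    _ ≤ 2 * (l 0 / t) ^ α * (3 * t) := by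
        have := hl 0
        gcongr
        linarith [hl n]
    _ = 6 * l 0 ^ α * t ^ (1 - α) := by
        rw [Real.div_rpow (hl 0).le ht.le, Real.rpow_sub ht, Real.rpow_one]
        field_simp
        ring

/-- For a generalized Cantor set `E ⊆ 𝕋` built from lengths `(l_n)` with
`l_{n+1}/l_n ≤ λ < 1/2`, one has `|E_t| = O(t^μ)` as `t → 0`, where
`μ = 1 − log 2 / log(1/λ)`. -/
theorem stmt_13 [Fact (0 < 2 * Real.pi)]
    (l : ℕ → ℝ) (lam : ℝ) (hl : ∀ n, 0 < l n) (hl2 : ∀ n, l n < 2 * Real.pi)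
    (hub : ∀ n, l (n + 1) / l n ≤ lam) (hlam : lam < 1 / 2) :
    ∃ C > (0 : ℝ), ∃ t₀ > (0 : ℝ), ∀ t ∈ Set.Ioo (0 : ℝ) t₀,
      (volume {ζ : AddCircle (2 * Real.pi) |
          Metric.infDist ζ ((fun x : ℝ => (x : AddCircle (2 * Real.pi))) '' genCantorSet l) ≤ t}).toReal ≤
        C * t ^ (1 - Real.log 2 / Real.log (1 / lam)) :=
  stmt_13_general l lam hl hub hlam
end
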